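/- arXiv:2405.04941 — 6 statements merged into one kernel-verified Lean document; each statement's English description precedes it below -/
import Mathlib

section
/- Define f_full : ℝ⁴ → ℝ by f_full(x, y, p, q) = 45·(1−x) + 5·x + 50·y + (90·x − 45·(1−x))·p + (10·(1−x) − 5·x + 100·(1−y) − 50·y)·q. Then the supremum over (x, y) ∈ [0,1] × [0,1] of the infimum over (p, q) ∈ [1/10, 9/10] × [1/10, 9/10] of f_full(x, y, p, q) equals 200/3 (i.e., 66⅔). -/
noncomputable def fFull (x y p q : ℝ) : ℝ :=
  45 * (1 - x) + 5 * x + 50 * y + (90 * x - 45 * (1 - x)) * p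
    + (10 * (1 - x) - 5 * x + 100 * (1 - y) - 50 * y) * q

lemma fFull_bddBelow (x y : ℝ) (hx : x ∈ Set.Icc (0:ℝ) 1) (hy : y ∈ Set.Icc (0:ℝ) 1) :
    BddBelow {w : ℝ | ∃ p ∈ Set.Icc (1/10 : ℝ) (9/10), ∃ q ∈ Set.Icc (1/10 : ℝ) (9/10),
      w = fFull x y p q} := by
  obtain ⟨hx0, hx1⟩ := hx
  obtain ⟨hy0, hy1⟩ := hy
  refine ⟨-1000, ?_⟩
  rintro w ⟨p, ⟨hp0, hp1⟩, q, ⟨hq0, hq1⟩, rfl⟩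
  unfold fFull
  have hp0' : (0:ℝ) ≤ p := by linarith
  have hq0' : (0:ℝ) ≤ q := by linarith
  nlinarith [mul_nonneg hx0 hp0', mul_nonneg hy0 hq0', mul_nonneg hx0 hq0',
    mul_nonneg (sub_nonneg.2 hx1) (sub_nonneg.2 hp1),
    mul_nonneg (sub_nonneg.2 hy1) (sub_nonneg.2 hq1)]

lemma fFull_inf_le (x y : ℝ) (hx : x ∈ Set.Icc (0:ℝ) 1) (hy : y ∈ Set.Icc (0:ℝ) 1) :
    sInf {w : ℝ | ∃ p ∈ Set.Icc (1/10 : ℝ) (9/10), ∃ q ∈ Set.Icc (1/10 : ℝ) (9/10),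
      w = fFull x y p q} ≤ 200 / 3 := by
  have hb := fFull_bddBelow x y hx hy
  obtain ⟨hx0, hx1⟩ := hx
  obtain ⟨hy0, hy1⟩ := hy
  rcases le_or_gt 0 (135 * x - 45) with hA | hA <;>
    rcases le_or_gt 0 (110 - 15 * x - 150 * y) with hB | hB
  · refine csInf_le_of_le hb ⟨1/10, by norm_num, 1/10, by norm_num, rfl⟩ ?_
    unfold fFull; nlinarith
  · refine csInf_le_of_le hb ⟨1/10, by norm_num, 9/10, by norm_num, rfl⟩ ?_
    unfold fFull; nlinarith
  · refine csInf_le_of_le hb ⟨9/10, by norm_num, 1/10, by norm_num, rfl⟩ ?_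
    unfold fFull; nlinarith
  · refine csInf_le_of_le hb ⟨9/10, by norm_num, 9/10, by norm_num, rfl⟩ ?_
    unfold fFull; nlinarith

lemma fFull_opt :
    sInf {w : ℝ | ∃ p ∈ Set.Icc (1/10 : ℝ) (9/10), ∃ q ∈ Set.Icc (1/10 : ℝ) (9/10),
      w = fFull (1/3) (7/10) p q} = 200 / 3 := by
  have hset : {w : ℝ | ∃ p ∈ Set.Icc (1/10 : ℝ) (9/10), ∃ q ∈ Set.Icc (1/10 : ℝ) (9/10),
      w = fFull (1/3) (7/10) p q} = {(200/3 : ℝ)} := by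
    ext w
    constructor
    · rintro ⟨p, hp, q, hq, rfl⟩
      simp only [Set.mem_singleton_iff]
      unfold fFull; ring
    · rintro rfl
      exact ⟨1/10, by norm_num, 1/10, by norm_num, by unfold fFull; ring⟩
  rw [hset, csInf_singleton]

theorem fullStickiness_optimal_value :
    sSup {v : ℝ | ∃ x ∈ Set.Icc (0 : ℝ) 1, ∃ y ∈ Set.Icc (0 : ℝ) 1,
        v = sInf {w : ℝ | ∃ p ∈ Set.Icc (1/10 : ℝ) (9/10), ∃ q ∈ Set.Icc (1/10 : ℝ) (9/10),
          w = fFull x y p q}} = 200 / 3 := by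
  apply le_antisymm
  · apply csSup_le
    · exact ⟨200/3, 1/3, by norm_num, 7/10, by norm_num, fFull_opt.symm⟩
    · rintro v ⟨x, hx, y, hy, rfl⟩
      exact fFull_inf_le x y hx hy
  · apply le_csSup
    · refine ⟨200/3, ?_⟩
      rintro v ⟨x, hx, y, hy, rfl⟩
      exact fFull_inf_le x y hx hy
    · exact ⟨1/3, by norm_num, 7/10, by norm_num, fFull_opt.symm⟩
end

section
/- Define f_full : ℝ⁴ → ℝ by f_full(x, y, p, q) = 45·(1−x) + 5·x + 50·y + (90·x − 45·(1−x))·p + (10·(1−x) − 5·x + 100·(1−y) − 50·y)·q, and f_zero : ℝ⁵ → ℝ by f_zero(x, y, p, q₁, q₂) = 45·(1−x) + 5·x + 50·y + (90·x − 45·(1−x))·p + (10·(1−x) − 5·x)·q₁ + (100·(1−y) − 50·y)·q₂. Then the supremum over (x, y) ∈ [0,1]² of the infimum over (p, q) ∈ [1/10, 9/10]² of f_full(x, y, p, q) is strictly greater than the supremum over (x, y) ∈ [0,1]² of the infimum over (p, q₁, q₂) ∈ [1/10, 9/10]³ of f_zero(x, y, p, q₁, q₂); in particular the two optimal values differ (200/3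 > 131/2). -/
noncomputable def fZero (x y p q₁ q₂ : ℝ) : ℝ :=
  45 * (1 - x) + 5 * x + 50 * y + (90 * x - 45 * (1 - x)) * p
    + (10 * (1 - x) - 5 * x) * q₁ + (100 * (1 - y) - 50 * y) * q₂

/-!
Under full stickiness the agent can play `x = 1/3`, `y = 7/10`, which makes both coefficients
of `(p, q)` in `fFull` vanish, so nature cannot push the payoff below `200/3`.
Under zero stickiness `fZero` splits into an `x`-part in `(p, q₁)` and a `y`-part in `q₂`;
nature minimises each part separately at a vertex of its box, and these best responses keep the
two parts below `193/6` and `100/3`, so every strategy of the agent is worth at most `131/2`.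
-/

open Set

noncomputable section

/-- Nature's worst case against the agent's strategy `(x, y)` when it fixes `(p, q)` once. -/
def natureValueFull (x y : ℝ) : ℝ :=
  sInf {w : ℝ | ∃ p ∈ Icc (1/10 : ℝ) (9/10), ∃ q ∈ Icc (1/10 : ℝ) (9/10), w = fFull x y p q}

/-- Nature's worst case against `(x, y)` when it picks `q` independently at each history. -/
def natureValueZero (x y : ℝ) : ℝ :=
  sInf {w : ℝ | ∃ p ∈ Icc (1/10 : ℝ) (9/10), ∃ q₁ ∈ Icc (1/10 : ℝ) (9/10),
    ∃ q₂ ∈ Icc (1/10 : ℝ) (9/10), w = fZero x y p q₁ q₂}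

def optimalValueFull : ℝ :=
  sSup {v : ℝ | ∃ x ∈ Icc (0 : ℝ) 1, ∃ y ∈ Icc (0 : ℝ) 1, v = natureValueFull x y}

def optimalValueZero : ℝ :=
  sSup {v : ℝ | ∃ x ∈ Icc (0 : ℝ) 1, ∃ y ∈ Icc (0 : ℝ) 1, v = natureValueZero x y}

end

theorem natureValueFull_le_fFull (x y : ℝ) {p q : ℝ} (hp : p ∈ Icc (1/10 : ℝ) (9/10))
    (hq : q ∈ Icc (1/10 : ℝ) (9/10)) : natureValueFull x y ≤ fFull x y p q := by
  refine csInf_le ?_ ⟨p, hp, q, hq, rfl⟩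
  have hcont : Continuous fun b : ℝ × ℝ ↦ fFull x y b.1 b.2 := by unfold fFull; fun_prop
  have hbox : IsCompact (Icc (1/10 : ℝ) (9/10) ×ˢ Icc (1/10 : ℝ) (9/10)) :=
    isCompact_Icc.prod isCompact_Icc
  refine (hbox.image hcont).bddBelow.mono ?_
  rintro _ ⟨p, hp, q, hq, rfl⟩
  exact ⟨(p, q), ⟨hp, hq⟩, rfl⟩

theorem natureValueZero_le_fZero (x y : ℝ) {p q₁ q₂ : ℝ} (hp : p ∈ Icc (1/10 : ℝ) (9/10))
    (hq₁ : q₁ ∈ Icc (1/10 : ℝ) (9/10)) (hq₂ : q₂ ∈ Icc (1/10 : ℝ) (9/10)) :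
    natureValueZero x y ≤ fZero x y p q₁ q₂ := by
  refine csInf_le ?_ ⟨p, hp, q₁, hq₁, q₂, hq₂, rfl⟩
  have hcont : Continuous fun b : ℝ × ℝ × ℝ ↦ fZero x y b.1 b.2.1 b.2.2 := by
    unfold fZero; fun_prop
  have hbox : IsCompact (Icc (1/10 : ℝ) (9/10) ×ˢ Icc (1/10 : ℝ) (9/10) ×ˢ Icc (1/10 : ℝ) (9/10)) :=
    isCompact_Icc.prod (isCompact_Icc.prod isCompact_Icc)
  refine (hbox.image hcont).bddBelow.mono ?_
  rintro _ ⟨p, hp, q₁, hq₁, q₂, hq₂, rfl⟩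
  exact ⟨(p, q₁, q₂), ⟨hp, hq₁, hq₂⟩, rfl⟩

theorem fFull_one_third_seven_tenths (p q : ℝ) : fFull (1/3) (7/10) p q = 200/3 := by
  unfold fFull; ring

theorem natureValueFull_one_third_seven_tenths : natureValueFull (1/3) (7/10) = 200/3 := by
  have hvalues : {w : ℝ | ∃ p ∈ Icc (1/10 : ℝ) (9/10), ∃ q ∈ Icc (1/10 : ℝ) (9/10),
      w = fFull (1/3) (7/10) p q} = {200/3} := by
    refine eq_singleton_iff_unique_mem.mpr ⟨⟨1/10, by norm_num, 1/10, by norm_num, ?_⟩, ?_⟩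
    · rw [fFull_one_third_seven_tenths]
    · rintro _ ⟨p, -, q, -, rfl⟩
      exact fFull_one_third_seven_tenths p q
  rw [natureValueFull, hvalues, csInf_singleton]

theorem le_optimalValueFull : 200/3 ≤ optimalValueFull := by
  refine le_csSup ⟨100, ?_⟩ ⟨1/3, by norm_num, 7/10, by norm_num,
    natureValueFull_one_third_seven_tenths.symm⟩
  rintro _ ⟨x, hx, y, hy, rfl⟩
  have hp : (1/10 : ℝ) ∈ Icc (1/10 : ℝ) (9/10) := by norm_num
  refine (natureValueFull_le_fFull x y hp hp).trans ?_
  unfold fFull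
  linarith [hx.1, hy.2]

theorem exists_fZero_le (x y : ℝ) :
    ∃ p ∈ Icc (1/10 : ℝ) (9/10), ∃ q₂ ∈ Icc (1/10 : ℝ) (9/10), fZero x y p (1/10) q₂ ≤ 131/2 := by
  obtain ⟨p, hp, hxPart⟩ : ∃ p ∈ Icc (1/10 : ℝ) (9/10),
      45 - 40 * x + (135 * x - 45) * p + (10 - 15 * x) / 10 ≤ 193/6 := by
    rcases le_total x (1/3) with h | h
    · exact ⟨9/10, by norm_num, by linarith⟩
    · exact ⟨1/10, by norm_num, by linarith⟩
  obtain ⟨q₂, hq₂, hyPart⟩ : ∃ q₂ ∈ Icc (1/10 : ℝ) (9/10), 50 * y + (100 - 150 * y) * q₂ ≤ 100/3 := by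
    rcases le_total y (2/3) with h | h
    · exact ⟨1/10, by norm_num, by linarith⟩
    · exact ⟨9/10, by norm_num, by linarith⟩
  exact ⟨p, hp, q₂, hq₂, by unfold fZero; linarith⟩

theorem optimalValueZero_le : optimalValueZero ≤ 131/2 := by
  refine Real.sSup_le ?_ (by norm_num)
  rintro _ ⟨x, -, y, -, rfl⟩
  obtain ⟨p, hp, q₂, hq₂, hle⟩ := exists_fZero_le x y
  exact (natureValueZero_le_fZero x y hp (by norm_num) hq₂).trans hle

theorem stickiness_matters :
    sSup {v : ℝ | ∃ x ∈ Set.Icc (0 : ℝ) 1, ∃ y ∈ Set.Icc (0 : ℝ) 1,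
        v = sInf {w : ℝ | ∃ p ∈ Set.Icc (1/10 : ℝ) (9/10), ∃ q ∈ Set.Icc (1/10 : ℝ) (9/10),
          w = fFull x y p q}}
      >
    sSup {v : ℝ | ∃ x ∈ Set.Icc (0 : ℝ) 1, ∃ y ∈ Set.Icc (0 : ℝ) 1,
        v = sInf {w : ℝ | ∃ p ∈ Set.Icc (1/10 : ℝ) (9/10), ∃ q₁ ∈ Set.Icc (1/10 : ℝ) (9/10),
          ∃ q₂ ∈ Set.Icc (1/10 : ℝ) (9/10), w = fZero x y p q₁ q₂}} :=
  calc optimalValueZero ≤ 131/2 := optimalValueZero_le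
    _ < 200/3 := by norm_num
    _ ≤ optimalValueFull := le_optimalValueFull
end

section
/- Define f_full : ℝ⁴ → ℝ by f_full(x, y, p, q) = 45·(1−x) + 5·x + 50·y + (90·x − 45·(1−x))·p + (10·(1−x) − 5·x + 100·(1−y) − 50·y)·q. Then for all (x, y) ∈ [0,1] × [0,1], f_full(x, y, 1/3, 1/3) = 200/3, and for all (p, q) ∈ [1/10, 9/10] × [1/10, 9/10], f_full(1/3, 7/10, p, q) = 200/3. Consequently the agent policy (x, y) = (1/3, 7/10) and the nature assignment (p, q) = (1/3, 1/3) form a saddle point (Nash equilibrium) of the game with value 200/3. -/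
theorem fullStickiness_saddle_point :
    (∀ x ∈ Set.Icc (0 : ℝ) 1, ∀ y ∈ Set.Icc (0 : ℝ) 1,
        fFull x y (1/3) (1/3) = 200 / 3) ∧
    (∀ p ∈ Set.Icc (1/10 : ℝ) (9/10), ∀ q ∈ Set.Icc (1/10 : ℝ) (9/10),
        fFull (1/3) (7/10) p q = 200 / 3) ∧
    -- saddle point (Nash equilibrium) with value 200/3:
    fFull (1/3) (7/10) (1/3) (1/3) = 200 / 3 ∧
    (∀ x ∈ Set.Icc (0 : ℝ) 1, ∀ y ∈ Set.Icc (0 : ℝ) 1,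
        fFull x y (1/3) (1/3) ≤ fFull (1/3) (7/10) (1/3) (1/3)) ∧
    (∀ p ∈ Set.Icc (1/10 : ℝ) (9/10), ∀ q ∈ Set.Icc (1/10 : ℝ) (9/10),
        fFull (1/3) (7/10) (1/3) (1/3) ≤ fFull (1/3) (7/10) p q) := by
  refine ⟨fun x _ y _ => by unfold fFull; ring,
    fun p _ q _ => by unfold fFull; ring,
    by unfold fFull; ring,
    fun x _ y _ => le_of_eq (by unfold fFull; ring),
    fun p _ q _ => le_of_eq (by unfold fFull; ring)⟩
end

section
/- Define g_af : ℝ³ → ℝ by g_af(x, p₁, p₂) = 300·x·p₁ + 300·(1−x)·(1−p₂). Then the supremum over x ∈ [0,1] of the infimum over (p₁, p₂) ∈ [1/10, 9/10] × [1/10, 9/10] of g_af(x, p₁, p₂) equals 30. -/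
noncomputable def gAf (x p₁ p₂ : ℝ) : ℝ :=
  300 * x * p₁ + 300 * (1 - x) * (1 - p₂)

lemma inner_inf (x : ℝ) (hx : x ∈ Set.Icc (0:ℝ) 1) :
    sInf {w : ℝ | ∃ p₁ ∈ Set.Icc (1/10 : ℝ) (9/10), ∃ p₂ ∈ Set.Icc (1/10 : ℝ) (9/10),
      w = gAf x p₁ p₂} = 30 := by
  obtain ⟨hx0, hx1⟩ := hx
  have hmem : (30:ℝ) ∈ {w : ℝ | ∃ p₁ ∈ Set.Icc (1/10 : ℝ) (9/10),
      ∃ p₂ ∈ Set.Icc (1/10 : ℝ) (9/10), w = gAf x p₁ p₂} := by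
    refine ⟨1/10, by norm_num, 9/10, by norm_num, ?_⟩
    unfold gAf; ring
  have hlb : ∀ w ∈ {w : ℝ | ∃ p₁ ∈ Set.Icc (1/10 : ℝ) (9/10),
      ∃ p₂ ∈ Set.Icc (1/10 : ℝ) (9/10), w = gAf x p₁ p₂}, (30:ℝ) ≤ w := by
    rintro w ⟨p₁, ⟨h1a, h1b⟩, p₂, ⟨h2a, h2b⟩, rfl⟩
    unfold gAf
    nlinarith [mul_nonneg hx0 (sub_nonneg.2 h1a), mul_nonneg (sub_nonneg.2 hx1) (sub_nonneg.2 h2a)]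
  exact le_antisymm (csInf_le ⟨30, hlb⟩ hmem) (le_csInf ⟨30, hmem⟩ hlb)

theorem agentFirst_optimal_value :
    sSup {v : ℝ | ∃ x ∈ Set.Icc (0 : ℝ) 1,
        v = sInf {w : ℝ | ∃ p₁ ∈ Set.Icc (1/10 : ℝ) (9/10), ∃ p₂ ∈ Set.Icc (1/10 : ℝ) (9/10),
          w = gAf x p₁ p₂}} = 30 := by
  have : {v : ℝ | ∃ x ∈ Set.Icc (0 : ℝ) 1,
      v = sInf {w : ℝ | ∃ p₁ ∈ Set.Icc (1/10 : ℝ) (9/10), ∃ p₂ ∈ Set.Icc (1/10 : ℝ) (9/10),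
        w = gAf x p₁ p₂}} = {30} := by
    ext v
    constructor
    · rintro ⟨x, hx, rfl⟩
      exact Set.mem_singleton_iff.mpr (inner_inf x hx)
    · rintro rfl
      exact ⟨0, by norm_num, (inner_inf 0 (by norm_num)).symm⟩
  rw [this, csSup_singleton]
end

section
/- Define g_af : ℝ³ → ℝ by g_af(x, p₁, p₂) = 300·x·p₁ + 300·(1−x)·(1−p₂) and g_nf : ℝ² → ℝ by g_nf(x, p) = 300·x·p + 300·(1−x)·(1−p). Then the supremum over x ∈ [0,1] of the infimum over (p₁, p₂) ∈ [1/10, 9/10]² of g_af(x, p₁, p₂) is strictly less than the supremum over x ∈ [0,1] of the infimum over p ∈ [1/10, 9/10] of g_nf(x, p); in particular the two optimal values differ (30 < 150). -/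
noncomputable def gNf (x p : ℝ) : ℝ :=
  300 * x * p + 300 * (1 - x) * (1 - p)

lemma inner_af (x : ℝ) (hx : x ∈ Set.Icc (0 : ℝ) 1) :
    sInf {w : ℝ | ∃ p₁ ∈ Set.Icc (1/10 : ℝ) (9/10), ∃ p₂ ∈ Set.Icc (1/10 : ℝ) (9/10),
      w = gAf x p₁ p₂} = 30 := by
  obtain ⟨hx0, hx1⟩ := hx
  have hmem : (30 : ℝ) ∈ {w : ℝ | ∃ p₁ ∈ Set.Icc (1/10 : ℝ) (9/10),
      ∃ p₂ ∈ Set.Icc (1/10 : ℝ) (9/10), w = gAf x p₁ p₂} := by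
    refine ⟨1/10, by norm_num, 9/10, by norm_num, ?_⟩
    unfold gAf; ring
  have hlb : ∀ w ∈ {w : ℝ | ∃ p₁ ∈ Set.Icc (1/10 : ℝ) (9/10),
      ∃ p₂ ∈ Set.Icc (1/10 : ℝ) (9/10), w = gAf x p₁ p₂}, (30 : ℝ) ≤ w := by
    rintro w ⟨p₁, hp₁, p₂, hp₂, rfl⟩
    unfold gAf
    nlinarith [mul_nonneg hx0 (by linarith [hp₁.1] : (0:ℝ) ≤ p₁ - 1/10),
      mul_nonneg (by linarith : (0:ℝ) ≤ 1 - x) (by linarith [hp₂.2] : (0:ℝ) ≤ 9/10 - p₂)]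
  exact le_antisymm (csInf_le ⟨30, hlb⟩ hmem) (le_csInf ⟨30, hmem⟩ hlb)

theorem order_of_play_matters :
    sSup {v : ℝ | ∃ x ∈ Set.Icc (0 : ℝ) 1,
        v = sInf {w : ℝ | ∃ p₁ ∈ Set.Icc (1/10 : ℝ) (9/10), ∃ p₂ ∈ Set.Icc (1/10 : ℝ) (9/10),
          w = gAf x p₁ p₂}}
      <
    sSup {v : ℝ | ∃ x ∈ Set.Icc (0 : ℝ) 1,
        v = sInf {w : ℝ | ∃ p ∈ Set.Icc (1/10 : ℝ) (9/10), w = gNf x p}} := by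
  have hLset : {v : ℝ | ∃ x ∈ Set.Icc (0 : ℝ) 1,
      v = sInf {w : ℝ | ∃ p₁ ∈ Set.Icc (1/10 : ℝ) (9/10), ∃ p₂ ∈ Set.Icc (1/10 : ℝ) (9/10),
        w = gAf x p₁ p₂}} = {(30 : ℝ)} := by
    ext v
    constructor
    · rintro ⟨x, hx, rfl⟩
      exact Set.mem_singleton_iff.mpr (inner_af x hx)
    · rintro rfl
      exact ⟨0, by norm_num, (inner_af 0 (by norm_num)).symm⟩
  rw [hLset, csSup_singleton]
  -- inner infima for nature-first are bounded below by 0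
  have hbb : ∀ x ∈ Set.Icc (0 : ℝ) 1,
      BddBelow {w : ℝ | ∃ p ∈ Set.Icc (1/10 : ℝ) (9/10), w = gNf x p} := by
    rintro x ⟨hx0, hx1⟩
    refine ⟨0, ?_⟩
    rintro w ⟨p, hp, rfl⟩
    unfold gNf
    nlinarith [hp.1, hp.2, mul_nonneg hx0 (by linarith [hp.1] : (0:ℝ) ≤ p),
      mul_nonneg (by linarith : (0:ℝ) ≤ 1 - x) (by linarith [hp.2] : (0:ℝ) ≤ 1 - p)]
  have hmem150 : (150 : ℝ) ∈ {v : ℝ | ∃ x ∈ Set.Icc (0 : ℝ) 1,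
      v = sInf {w : ℝ | ∃ p ∈ Set.Icc (1/10 : ℝ) (9/10), w = gNf x p}} := by
    refine ⟨1/2, by norm_num, ?_⟩
    have hm : (150 : ℝ) ∈ {w : ℝ | ∃ p ∈ Set.Icc (1/10 : ℝ) (9/10), w = gNf (1/2) p} := by
      refine ⟨1/10, by norm_num, ?_⟩
      unfold gNf; ring
    refine le_antisymm ?_ (csInf_le (hbb (1/2) (by norm_num)) hm)
    refine le_csInf ⟨150, hm⟩ ?_
    rintro w ⟨p, hp, rfl⟩
    unfold gNf; linarith
  have hba : BddAbove {v : ℝ | ∃ x ∈ Set.Icc (0 : ℝ) 1,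
      v = sInf {w : ℝ | ∃ p ∈ Set.Icc (1/10 : ℝ) (9/10), w = gNf x p}} := by
    refine ⟨270, ?_⟩
    rintro v ⟨x, hx, rfl⟩
    have h1 : sInf {w : ℝ | ∃ p ∈ Set.Icc (1/10 : ℝ) (9/10), w = gNf x p} ≤ gNf x (1/10) :=
      csInf_le (hbb x hx) ⟨1/10, by norm_num, rfl⟩
    have h2 : gNf x (1/10) ≤ 270 := by
      unfold gNf; nlinarith [hx.1, hx.2]
    linarith
  have := le_csSup hba hmem150
  linarith
end

section
/- Let T be a nonempty set, let n ≥ 1 be a natural number, and let V : Fin n → T → ℝ be a payoff function that is uniformly bounded: there exists B ∈ ℝ such that |V i t| ≤ B for all i and t. Let Δ = { x : Fin n → ℝ | (∀ i, 0 ≤ x i) ∧ Σ_i x i = 1 } be the standard probability simplex, let Λ be the set of finitely supported probability distributions on T, and for x ∈ Δ and λ ∈ Λ define W(x, λ) = Σ_{t ∈ support(λ)} λ(t) · (Σ_i x(i) · V i t). Then the game has a value: sSup_{x ∈ Δ} sInf_{λ ∈ Λ} W(x, λ) = sInf_{λ ∈ Λ} sSup_{x ∈ Δ} W(x, λ), where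 the suprema and infima are taken in ℝ. -/
lemma weighted_le' {ι : Type*} (s : Finset ι) (w c : ι → ℝ) (b : ℝ)
    (hw : ∀ i ∈ s, 0 ≤ w i) (h1 : ∑ i ∈ s, w i = 1) (hc : ∀ i ∈ s, c i ≤ b) :
    ∑ i ∈ s, w i * c i ≤ b := by
  calc ∑ i ∈ s, w i * c i ≤ ∑ i ∈ s, w i * b := by
        exact Finset.sum_le_sum fun i hi => mul_le_mul_of_nonneg_left (hc i hi) (hw i hi)
    _ = b := by rw [← Finset.sum_mul, h1, one_mul]

lemma weighted_ge' {ι : Type*} (s : Finset ι) (w c : ι → ℝ) (b : ℝ)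
    (hw : ∀ i ∈ s, 0 ≤ w i) (h1 : ∑ i ∈ s, w i = 1) (hc : ∀ i ∈ s, b ≤ c i) :
    b ≤ ∑ i ∈ s, w i * c i := by
  calc b = ∑ i ∈ s, w i * b := by rw [← Finset.sum_mul, h1, one_mul]
    _ ≤ ∑ i ∈ s, w i * c i := Finset.sum_le_sum fun i hi =>
        mul_le_mul_of_nonneg_left (hc i hi) (hw i hi)

lemma exists_finsupp_of_mem_convexHull {T : Type*} [Nonempty T] {n : ℕ} (V : Fin n → T → ℝ)
    {c : Fin n → ℝ} (hc : c ∈ convexHull ℝ (Set.range fun t => fun i => V i t)) :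
    ∃ lam : T →₀ ℝ, (∀ t, 0 ≤ lam t) ∧ (∑ t ∈ lam.support, lam t) = 1 ∧
      ∀ i, (∑ t ∈ lam.support, lam t * V i t) = c i := by
  classical
  rw [convexHull_eq] at hc
  obtain ⟨ι, s, w, z, hw, h1, hz, hcm⟩ := hc
  have hτ : ∀ j ∈ s, ∃ t : T, z j = fun i => V i t := by
    intro j hj
    obtain ⟨t, ht⟩ := hz j hj
    exact ⟨t, ht.symm⟩
  choose! τ hτ using hτ
  set lam : T →₀ ℝ := ∑ j ∈ s, Finsupp.single (τ j) (w j) with hlam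
  have key : ∀ g : T → ℝ, (∑ t ∈ lam.support, lam t * g t) = ∑ j ∈ s, w j * g (τ j) := by
    intro g
    have h1' : (∑ t ∈ lam.support, lam t * g t) = Finsupp.linearCombination ℝ g lam := by
      rw [Finsupp.linearCombination_apply, Finsupp.sum]
      simp [smul_eq_mul]
    rw [h1', hlam, map_sum]
    simp [Finsupp.linearCombination_single, smul_eq_mul]
  have hnn : ∀ t, 0 ≤ lam t := by
    intro t
    rw [hlam, Finsupp.finset_sum_apply]
    refine Finset.sum_nonneg fun j hj => ?_
    rw [Finsupp.single_apply]
    split <;> simp [hw j hj]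
  refine ⟨lam, hnn, ?_, ?_⟩
  · have := key (fun _ => 1)
    simpa [h1] using this
  · intro i
    rw [key (V i)]
    rw [Finset.centerMass_eq_of_sum_1 _ _ h1] at hcm
    have := congrFun hcm i
    rw [← this]
    simp only [Finset.sum_apply, Pi.smul_apply, smul_eq_mul]
    exact Finset.sum_congr rfl fun j hj => by rw [hτ j hj]

/-- Separation: if no finitely supported distribution pushes all coordinates below `r`,
then some simplex point has value at least `r` against every pure strategy. -/
lemma separation_lemma {T : Type*} [Nonempty T] {n : ℕ} (V : Fin n → T → ℝ) (r : ℝ)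
    (h : ¬ ∃ lam : T →₀ ℝ, (∀ t, 0 ≤ lam t) ∧ (∑ t ∈ lam.support, lam t) = 1 ∧
      ∀ i, (∑ t ∈ lam.support, lam t * V i t) ≤ r) :
    ∃ x : Fin n → ℝ, (∀ i, 0 ≤ x i) ∧ (∑ i, x i) = 1 ∧ ∀ t, r ≤ ∑ i, x i * V i t := by
  classical
  set K := convexHull ℝ (Set.range fun t => fun i => V i t) with hK
  set S' : Set (Fin n → ℝ) := {y | ∀ i, y i < r} with hS'
  have hdisj : Disjoint S' K := by
    rw [Set.disjoint_left]
    rintro y hy hyK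
    obtain ⟨lam, h0, h1, h2⟩ := exists_finsupp_of_mem_convexHull V hyK
    exact h ⟨lam, h0, h1, fun i => by rw [h2 i]; exact (hy i).le⟩
  have hconv : Convex ℝ S' := by
    have hSi : S' = ⋂ i, {y : Fin n → ℝ | y i < r} := by ext y; simp [hS']
    rw [hSi]
    exact convex_iInter fun i => convex_halfSpace_lt ⟨fun a b => rfl, fun c a => rfl⟩ r
  have hopen : IsOpen S' := by
    have hSi : S' = ⋂ i, (fun y : Fin n → ℝ => y i) ⁻¹' Set.Iio r := by
      ext y; simp [hS', Set.mem_iInter]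
    rw [hSi]
    exact isOpen_iInter_of_finite fun i => isOpen_Iio.preimage (continuous_apply i)
  obtain ⟨f, u, hfu, hfK⟩ := geometric_hahn_banach_open hconv hopen (convex_convexHull ℝ _) hdisj
  set e : Fin n → (Fin n → ℝ) := fun i j => if i = j then 1 else 0 with he
  set xc : Fin n → ℝ := fun i => f (e i) with hxc
  have hrepr : ∀ y : Fin n → ℝ, f y = ∑ i, y i * xc i := by
    intro y
    conv_lhs => rw [pi_eq_sum_univ y]
    rw [map_sum]
    exact Finset.sum_congr rfl fun i _ => by rw [map_smul, smul_eq_mul]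
  have hy0 : (fun _ => r - 1) ∈ S' := fun i => by simp
  have hfy0 : f (fun _ => r - 1) < u := hfu _ hy0
  have hxc0 : ∀ i, 0 ≤ xc i := by
    intro i
    by_contra hneg
    push_neg at hneg
    set M : ℝ := (u - f (fun _ => r - 1) + 1) / (-xc i) with hM
    have hMpos : 0 < M := div_pos (by linarith) (by linarith)
    have hmem : ((fun _ => r - 1) - M • e i) ∈ S' := by
      intro j
      simp only [Pi.sub_apply, Pi.smul_apply, smul_eq_mul, he]
      split <;> [linarith ; linarith]
    have hlt := hfu _ hmem
    rw [map_sub, map_smul, smul_eq_mul] at hlt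
    have hcancel : M * (-xc i) = u - f (fun _ => r - 1) + 1 :=
      div_mul_cancel₀ _ (by linarith)
    have : f (e i) = xc i := rfl
    rw [this] at hlt
    linarith
  have hsum0 : 0 ≤ ∑ i, xc i := Finset.sum_nonneg fun i _ => hxc0 i
  have hKne : (fun i => V i (Classical.arbitrary T)) ∈ K :=
    subset_convexHull ℝ _ ⟨Classical.arbitrary T, rfl⟩
  have hsum_pos : 0 < ∑ i, xc i := by
    rcases hsum0.lt_or_eq with h' | h'
    · exact h'
    · exfalso
      have hall : ∀ i ∈ Finset.univ, xc i = 0 :=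
        (Finset.sum_eq_zero_iff_of_nonneg fun i _ => hxc0 i).mp h'.symm
      have hf0 : ∀ y : Fin n → ℝ, f y = 0 := by
        intro y; rw [hrepr]
        exact Finset.sum_eq_zero fun i hi => by rw [hall i hi, mul_zero]
      have h1 := hfK _ hKne
      rw [hf0] at h1
      rw [hf0] at hfy0
      linarith
  have hu_ge : (∑ i, xc i) * r ≤ u := by
    by_contra h'
    push_neg at h'
    set δ : ℝ := ((∑ i, xc i) * r - u) / (∑ i, xc i) with hδ
    have hδpos : 0 < δ := div_pos (by linarith) hsum_pos
    have hmem : (fun _ => r - δ) ∈ S' := fun i => by simp; linarith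
    have hlt := hfu _ hmem
    rw [hrepr] at hlt
    have heq : ∑ i, (r - δ) * xc i = (r - δ) * ∑ i, xc i := by
      rw [Finset.mul_sum]
    rw [heq] at hlt
    have hcancel : δ * (∑ i, xc i) = (∑ i, xc i) * r - u :=
      div_mul_cancel₀ _ (ne_of_gt hsum_pos)
    nlinarith
  refine ⟨fun i => xc i / (∑ j, xc j), fun i => div_nonneg (hxc0 i) hsum_pos.le, ?_, ?_⟩
  · rw [← Finset.sum_div, div_self (ne_of_gt hsum_pos)]
  · intro t
    have hKt : (fun i => V i t) ∈ K := subset_convexHull ℝ _ ⟨t, rfl⟩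
    have h1 := hfK _ hKt
    rw [hrepr] at h1
    have heq : ∑ i, (xc i / ∑ j, xc j) * V i t = (∑ i, V i t * xc i) / (∑ j, xc j) := by
      rw [Finset.sum_div]
      exact Finset.sum_congr rfl fun i _ => by ring
    rw [heq, le_div_iff₀ hsum_pos]
    nlinarith

lemma gameW_swap {T : Type*} {n : ℕ} (V : Fin n → T → ℝ) (x : Fin n → ℝ) (lam : T →₀ ℝ) :
    ∑ t ∈ lam.support, lam t * ∑ i, x i * V i t
      = ∑ i, x i * ∑ t ∈ lam.support, lam t * V i t := by
  calc ∑ t ∈ lam.support, lam t * ∑ i, x i * V i t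
      = ∑ t ∈ lam.support, ∑ i, x i * (lam t * V i t) := by
        refine Finset.sum_congr rfl fun t _ => ?_
        rw [Finset.mul_sum]
        exact Finset.sum_congr rfl fun i _ => by ring
    _ = ∑ i, ∑ t ∈ lam.support, x i * (lam t * V i t) := Finset.sum_comm
    _ = ∑ i, x i * ∑ t ∈ lam.support, lam t * V i t := by
        exact Finset.sum_congr rfl fun i _ => by rw [Finset.mul_sum]

/-- A convex semi-infinite zero-sum game with a finite set of deterministic policies for the
maximizer, an arbitrary set `T` of deterministic policies for the minimizer, and uniformly
bounded payoffs has a value: sup inf = inf sup over mixed policies. -/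
theorem semiInfinite_game_has_value (T : Type*) (hT : Nonempty T)
    (n : ℕ) (hn : 1 ≤ n) (V : Fin n → T → ℝ)
    (B : ℝ) (hB : ∀ i t, |V i t| ≤ B) :
    sSup {v : ℝ | ∃ x : Fin n → ℝ, ((∀ i, 0 ≤ x i) ∧ (∑ i, x i) = 1) ∧
        v = sInf {w : ℝ | ∃ lam : T →₀ ℝ, ((∀ t, 0 ≤ lam t) ∧ (∑ t ∈ lam.support, lam t) = 1) ∧
          w = ∑ t ∈ lam.support, lam t * ∑ i, x i * V i t}}
      =
    sInf {w : ℝ | ∃ lam : T →₀ ℝ, ((∀ t, 0 ≤ lam t) ∧ (∑ t ∈ lam.support, lam t) = 1) ∧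
        w = sSup {v : ℝ | ∃ x : Fin n → ℝ, ((∀ i, 0 ≤ x i) ∧ (∑ i, x i) = 1) ∧
          v = ∑ t ∈ lam.support, lam t * ∑ i, x i * V i t}} := by
  classical
  haveI : Nonempty T := hT
  set t0 : T := Classical.arbitrary T with ht0
  have i0 : Fin n := ⟨0, hn⟩
  have hB0 : (0:ℝ) ≤ B := le_trans (abs_nonneg _) (hB i0 t0)
  -- canonical simplex point
  have hnne : (n:ℝ) ≠ 0 := Nat.cast_ne_zero.mpr (by omega)
  set x0 : Fin n → ℝ := fun _ => (n:ℝ)⁻¹ with hx0def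
  have hx0 : (∀ i, 0 ≤ x0 i) ∧ (∑ i, x0 i) = 1 := by
    constructor
    · intro i; positivity
    · rw [Finset.sum_const, Finset.card_fin, nsmul_eq_mul]
      exact mul_inv_cancel₀ hnne
  -- canonical distribution
  set lam0 : T →₀ ℝ := Finsupp.single t0 1 with hlam0def
  have hlam0 : (∀ t, 0 ≤ lam0 t) ∧ (∑ t ∈ lam0.support, lam0 t) = 1 := by
    constructor
    · intro t
      rw [hlam0def, Finsupp.single_apply]
      split <;> norm_num
    · rw [hlam0def, Finsupp.support_single_ne_zero _ one_ne_zero]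
      simp
  -- bounds
  have hdot : ∀ x : Fin n → ℝ, (∀ i, 0 ≤ x i) → (∑ i, x i) = 1 →
      ∀ t, -B ≤ (∑ i, x i * V i t) ∧ (∑ i, x i * V i t) ≤ B := by
    intro x h0 h1 t
    exact ⟨weighted_ge' _ x _ _ (fun i _ => h0 i) h1 (fun i _ => (abs_le.mp (hB i t)).1),
      weighted_le' _ x _ _ (fun i _ => h0 i) h1 (fun i _ => (abs_le.mp (hB i t)).2)⟩
  have hW : ∀ (x : Fin n → ℝ) (lam : T →₀ ℝ), (∀ i, 0 ≤ x i) → (∑ i, x i) = 1 →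
      (∀ t, 0 ≤ lam t) → (∑ t ∈ lam.support, lam t) = 1 →
      -B ≤ (∑ t ∈ lam.support, lam t * ∑ i, x i * V i t) ∧
        (∑ t ∈ lam.support, lam t * ∑ i, x i * V i t) ≤ B := by
    intro x lam hx1 hx2 hl1 hl2
    exact ⟨weighted_ge' _ _ _ _ (fun t _ => hl1 t) hl2 (fun t _ => (hdot x hx1 hx2 t).1),
      weighted_le' _ _ _ _ (fun t _ => hl1 t) hl2 (fun t _ => (hdot x hx1 hx2 t).2)⟩
  -- the inner sets
  have hSInne : ∀ x : Fin n → ℝ,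
      Set.Nonempty {w : ℝ | ∃ lam : T →₀ ℝ,
        ((∀ t, 0 ≤ lam t) ∧ (∑ t ∈ lam.support, lam t) = 1) ∧
        w = ∑ t ∈ lam.support, lam t * ∑ i, x i * V i t} :=
    fun x => ⟨_, lam0, hlam0, rfl⟩
  have hSInbdd : ∀ x : Fin n → ℝ, (∀ i, 0 ≤ x i) → (∑ i, x i) = 1 →
      BddBelow {w : ℝ | ∃ lam : T →₀ ℝ,
        ((∀ t, 0 ≤ lam t) ∧ (∑ t ∈ lam.support, lam t) = 1) ∧
        w = ∑ t ∈ lam.support, lam t * ∑ i, x i * V i t} := by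
    rintro x hx1 hx2
    exact ⟨-B, by rintro w ⟨lam, hlam, rfl⟩; exact (hW x lam hx1 hx2 hlam.1 hlam.2).1⟩
  have hSOutne : ∀ lam : T →₀ ℝ,
      Set.Nonempty {v : ℝ | ∃ x : Fin n → ℝ, ((∀ i, 0 ≤ x i) ∧ (∑ i, x i) = 1) ∧
        v = ∑ t ∈ lam.support, lam t * ∑ i, x i * V i t} :=
    fun lam => ⟨_, x0, hx0, rfl⟩
  have hSOutbdd : ∀ lam : T →₀ ℝ, (∀ t, 0 ≤ lam t) → (∑ t ∈ lam.support, lam t) = 1 →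
      BddAbove {v : ℝ | ∃ x : Fin n → ℝ, ((∀ i, 0 ≤ x i) ∧ (∑ i, x i) = 1) ∧
        v = ∑ t ∈ lam.support, lam t * ∑ i, x i * V i t} := by
    rintro lam hl1 hl2
    exact ⟨B, by rintro v ⟨x, hx, rfl⟩; exact (hW x lam hx.1 hx.2 hl1 hl2).2⟩
  -- outer sets
  have hS1ne : Set.Nonempty {v : ℝ | ∃ x : Fin n → ℝ, ((∀ i, 0 ≤ x i) ∧ (∑ i, x i) = 1) ∧
      v = sInf {w : ℝ | ∃ lam : T →₀ ℝ,
        ((∀ t, 0 ≤ lam t) ∧ (∑ t ∈ lam.support, lam t) = 1) ∧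
        w = ∑ t ∈ lam.support, lam t * ∑ i, x i * V i t}} := ⟨_, x0, hx0, rfl⟩
  have hS2ne : Set.Nonempty {w : ℝ | ∃ lam : T →₀ ℝ,
      ((∀ t, 0 ≤ lam t) ∧ (∑ t ∈ lam.support, lam t) = 1) ∧
      w = sSup {v : ℝ | ∃ x : Fin n → ℝ, ((∀ i, 0 ≤ x i) ∧ (∑ i, x i) = 1) ∧
        v = ∑ t ∈ lam.support, lam t * ∑ i, x i * V i t}} := ⟨_, lam0, hlam0, rfl⟩
  have hS1bdd : BddAbove {v : ℝ | ∃ x : Fin n → ℝ, ((∀ i, 0 ≤ x i) ∧ (∑ i, x i) = 1) ∧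
      v = sInf {w : ℝ | ∃ lam : T →₀ ℝ,
        ((∀ t, 0 ≤ lam t) ∧ (∑ t ∈ lam.support, lam t) = 1) ∧
        w = ∑ t ∈ lam.support, lam t * ∑ i, x i * V i t}} := by
    refine ⟨B, ?_⟩
    rintro v ⟨x, hx, rfl⟩
    exact csInf_le_of_le (hSInbdd x hx.1 hx.2) ⟨lam0, hlam0, rfl⟩
      (hW x lam0 hx.1 hx.2 hlam0.1 hlam0.2).2
  apply le_antisymm
  · -- weak duality: sup inf ≤ inf sup
    apply csSup_le hS1ne
    rintro v ⟨x, hx, rfl⟩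
    apply le_csInf hS2ne
    rintro w ⟨lam, hlam, rfl⟩
    refine le_trans (csInf_le (hSInbdd x hx.1 hx.2) ⟨lam, hlam, rfl⟩)
      (le_csSup (hSOutbdd lam hlam.1 hlam.2) ⟨x, hx, rfl⟩)
  · -- strong duality
    apply le_of_forall_sub_le
    intro ε hε
    rw [sub_le_iff_le_add]
    rcases Classical.em (∃ lam : T →₀ ℝ, (∀ t, 0 ≤ lam t) ∧ (∑ t ∈ lam.support, lam t) = 1 ∧
        ∀ i, (∑ t ∈ lam.support, lam t * V i t) ≤
          sSup {v : ℝ | ∃ x : Fin n → ℝ, ((∀ i, 0 ≤ x i) ∧ (∑ i, x i) = 1) ∧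
            v = sInf {w : ℝ | ∃ lam : T →₀ ℝ,
              ((∀ t, 0 ≤ lam t) ∧ (∑ t ∈ lam.support, lam t) = 1) ∧
              w = ∑ t ∈ lam.support, lam t * ∑ i, x i * V i t}} + ε) with hyes | hno
    · obtain ⟨lam, hl1, hl2, hgood⟩ := hyes
      refine le_trans (csInf_le ?_ ⟨lam, ⟨hl1, hl2⟩, rfl⟩) ?_
      · refine ⟨-B, ?_⟩
        rintro w ⟨lam', hlam', rfl⟩
        exact le_csSup_of_le (hSOutbdd lam' hlam'.1 hlam'.2) ⟨x0, hx0, rfl⟩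
          (hW x0 lam' hx0.1 hx0.2 hlam'.1 hlam'.2).1
      · apply csSup_le (hSOutne lam)
        rintro v ⟨x, hx, rfl⟩
        rw [gameW_swap]
        exact weighted_le' _ x _ _ (fun i _ => hx.1 i) hx.2 (fun i _ => hgood i)
    · exfalso
      obtain ⟨x, hx1, hx2, hxt⟩ := separation_lemma V _ (by
        intro hcon
        exact hno (by obtain ⟨lam, h1, h2, h3⟩ := hcon; exact ⟨lam, h1, h2, h3⟩))
      have h1 : sSup {v : ℝ | ∃ x : Fin n → ℝ, ((∀ i, 0 ≤ x i) ∧ (∑ i, x i) = 1) ∧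
          v = sInf {w : ℝ | ∃ lam : T →₀ ℝ,
            ((∀ t, 0 ≤ lam t) ∧ (∑ t ∈ lam.support, lam t) = 1) ∧
            w = ∑ t ∈ lam.support, lam t * ∑ i, x i * V i t}} + ε
          ≤ sInf {w : ℝ | ∃ lam : T →₀ ℝ,
            ((∀ t, 0 ≤ lam t) ∧ (∑ t ∈ lam.support, lam t) = 1) ∧
            w = ∑ t ∈ lam.support, lam t * ∑ i, x i * V i t} := by
        apply le_csInf (hSInne x)
        rintro w ⟨lam, hlam, rfl⟩
        exact weighted_ge' _ _ _ _ (fun t _ => hlam.1 t) hlam.2 (fun t _ => hxt t)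
      have h2 := le_csSup hS1bdd ⟨x, ⟨hx1, hx2⟩, rfl⟩
      linarith
end
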